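/- Let C be a pointed category with finite limits and coequalizers. Then C satisfies property (P) if and only if: (a) the product of a regular epimorphism with an isomorphism is a regular epimorphism, and (b) for every effective equivalence relation (kernel pair of some morphism) R on a binary product A × B and all generalized elements x, y : S → A and z : S → B, if (x, 0) R (y, 0) then (x, z) R (y, z). -/

import Mathlib

open CategoryTheory Limits

/-!
Both (a) and (b) are instances of (P) in which one of the two diagrams is trivial: `g` is a
coequalizer of `(𝟙, 𝟙)`, and `𝟙 B` one of `(0, 0)`; for (b), (P) makes `c` factor through
`π ⨯ 𝟙 B` with `π` the coequalizer of `x, y`, and `(x, z) ≫ (π ⨯ 𝟙) = (y, z) ≫ (π ⨯ 𝟙)`.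

Conversely, by (b) a morphism `h` out of `X ⨯ Y` that coequalizes `u ⨯ u'` and `v ⨯ v'` also
coequalizes `u ⨯ 𝟙` and `v ⨯ 𝟙`. If `q` coequalizes `u, v`, (a) presents `q ⨯ 𝟙` as the
coequalizer of some pair `a, b`; these agree on the second factor and become equal after `q` on
the first, so (b) shows that `h` coequalizes `a, b`. Hence `q ⨯ 𝟙` is a coequalizer of
`u ⨯ 𝟙, v ⨯ 𝟙`, and `q₁ ⨯ q₂ = (q₁ ⨯ 𝟙) ≫ (𝟙 ⨯ q₂)` is handled one factor at a time.
-/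

/-- `q` is a coequalizer of the parallel pair `(u, v)`. -/
def IsCoeq {C : Type*} [Category C] {T X Q : C} (u v : T ⟶ X) (q : X ⟶ Q) : Prop :=
  ∃ h : u ≫ q = v ≫ q, Nonempty (IsColimit (Cofork.ofπ q h))

/-- Property (P): the product of two coequalizer diagrams is a coequalizer diagram. -/
def PropertyP (C : Type*) [Category C] [HasBinaryProducts C] : Prop :=
  ∀ {T₁ T₂ X X' Y Y' : C} (u v : T₁ ⟶ X) (u' v' : T₂ ⟶ Y) (q₁ : X ⟶ X') (q₂ : Y ⟶ Y'),
    IsCoeq u v q₁ → IsCoeq u' v' q₂ →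
      IsCoeq (prod.map u u') (prod.map v v') (prod.map q₁ q₂)

/-- A regular epimorphism: a coequalizer of some parallel pair. -/
def IsRegEpi {C : Type*} [Category C] {X Q : C} (q : X ⟶ Q) : Prop :=
  ∃ (T : C) (a b : T ⟶ X), IsCoeq a b q

section Coequalizers

variable {C : Type*} [Category C] {T X Q : C} {u v : T ⟶ X} {q : X ⟶ Q}

lemma isCoeq_self_of_isIso (f : T ⟶ X) (g : X ⟶ Q) [IsIso g] : IsCoeq f f g :=
  ⟨rfl, ⟨Cofork.IsColimit.mk _ (fun s => inv g ≫ s.π) (fun s => by simp)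
    (fun _ _ hm => by simp [← hm])⟩⟩

lemma IsCoeq.epi (h : IsCoeq u v q) : Epi q :=
  Cofork.IsColimit.epi h.2.some

lemma IsCoeq.exists_comp_eq (h : IsCoeq u v q) {Z : C} (k : X ⟶ Z) (hk : u ≫ k = v ≫ k) :
    ∃ t : Q ⟶ Z, q ≫ t = k :=
  ⟨h.2.some.desc (Cofork.ofπ k hk), Cofork.IsColimit.π_desc h.2.some⟩

lemma isCoeq_of_epi [Epi q] (w : u ≫ q = v ≫ q)
    (hfac : ∀ {Z : C} (k : X ⟶ Z), u ≫ k = v ≫ k → ∃ t : Q ⟶ Z, q ≫ t = k) : IsCoeq u v q :=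
  ⟨w, ⟨Cofork.IsColimit.ofExistsUnique fun s =>
    let ⟨t, ht⟩ := hfac s.π s.condition
    ⟨t, ht, fun _ hm => (cancel_epi q).1 (hm.trans ht.symm)⟩⟩⟩

end Coequalizers

section Products

variable {C : Type*} [Category C] [HasBinaryProducts C]

lemma IsCoeq.prod_map_swap {T T' X X' Q Q' : C} {u v : T ⟶ X} {u' v' : T' ⟶ X'}
    {q : X ⟶ Q} {q' : X' ⟶ Q'} (h : IsCoeq (prod.map u u') (prod.map v v') (prod.map q q')) :
    IsCoeq (prod.map u' u) (prod.map v' v) (prod.map q' q) :=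
  ⟨by simpa only [braid_natural, braid_natural_assoc, prod.symmetry_assoc, Category.assoc]
      using (prod.braiding T' T).hom ≫= h.1 =≫ (prod.braiding Q Q').hom,
    ⟨Cofork.isColimitOfIsos _ h.2.some _ (prod.braiding T T') (prod.braiding X X')
      (prod.braiding Q Q')
      (comm₃ := ((prod.braiding X X').inv ≫= braid_natural q q').trans (Iso.inv_hom_id_assoc _ _))⟩⟩

lemma isRegEpi_prod_map_of_propertyP (hP : PropertyP C) {X X' Y Y' : C} {f : X ⟶ X'}
    (hf : IsRegEpi f) (g : Y ⟶ Y') [IsIso g] : IsRegEpi (prod.map f g) :=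
  let ⟨T, a, b, hab⟩ := hf
  ⟨T ⨯ Y, prod.map a (𝟙 Y), prod.map b (𝟙 Y), hP a b _ _ f g hab (isCoeq_self_of_isIso _ _)⟩

variable [HasZeroMorphisms C]

/-- Condition (b) for the effective equivalence relation with kernel pair `c`. -/
def KernelPairSndInvariant {A B Q : C} (c : A ⨯ B ⟶ Q) : Prop :=
  ∀ {S : C} (x y : S ⟶ A) (z : S ⟶ B),
    prod.lift x 0 ≫ c = prod.lift y 0 ≫ c → prod.lift x z ≫ c = prod.lift y z ≫ c

lemma kernelPairSndInvariant_of_propertyP [HasCoequalizers C] (hP : PropertyP C) {A B Q : C}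
    (c : A ⨯ B ⟶ Q) : KernelPairSndInvariant c := by
  intro S x y z hxy
  have hπ : IsCoeq x y (coequalizer.π x y) :=
    ⟨coequalizer.condition x y, ⟨coequalizerIsCoequalizer x y⟩⟩
  have hlift (w : S ⟶ A) : prod.map w (0 : S ⟶ B) = prod.fst ≫ prod.lift w 0 := by
    ext <;> simp [prod.lift_fst, prod.lift_snd]
  obtain ⟨c', rfl⟩ := (hP x y 0 0 _ (𝟙 B) hπ (isCoeq_self_of_isIso _ _)).exists_comp_eq c
    (by rw [hlift, hlift, Category.assoc, Category.assoc, hxy])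
  rw [prod.lift_map_assoc, prod.lift_map_assoc, Category.comp_id, coequalizer.condition]

namespace KernelPairSndInvariant

variable {A B Q : C} {c : A ⨯ B ⟶ Q}

lemma comp_eq {W : C} {a b : W ⟶ A ⨯ B} (hc : KernelPairSndInvariant c)
    (hsnd : a ≫ prod.snd = b ≫ prod.snd)
    (hfst : prod.lift (a ≫ prod.fst) 0 ≫ c = prod.lift (b ≫ prod.fst) 0 ≫ c) :
    a ≫ c = b ≫ c := by
  have hlift (d : W ⟶ A ⨯ B) : prod.lift (d ≫ prod.fst) (d ≫ prod.snd) = d := by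
    rw [← prod.comp_lift, prod.lift_fst_snd, Category.comp_id]
  rw [← hlift a, ← hlift b, ← hsnd]
  exact hc _ _ _ hfst

lemma prod_map_id_eq (hc : KernelPairSndInvariant c) {T T' : C} {u v : T ⟶ A} {u' v' : T' ⟶ B}
    (h : prod.map u u' ≫ c = prod.map v v' ≫ c) :
    prod.map u (𝟙 B) ≫ c = prod.map v (𝟙 B) ≫ c := by
  have hlift (w : T ⟶ A) (w' : T' ⟶ B) :
      prod.lift (prod.map w (𝟙 B) ≫ prod.fst) 0 = prod.lift prod.fst 0 ≫ prod.map w w' := by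
    rw [prod.lift_map, prod.map_fst, zero_comp]
  refine hc.comp_eq (by rw [prod.map_snd, prod.map_snd]) ?_
  rw [hlift u u', hlift v v', Category.assoc, Category.assoc, h]

lemma id_prod_map_eq (hc : KernelPairSndInvariant ((prod.braiding B A).hom ≫ c)) {T T' : C}
    {u v : T ⟶ A} {u' v' : T' ⟶ B} (h : prod.map u u' ≫ c = prod.map v v' ≫ c) :
    prod.map (𝟙 A) u' ≫ c = prod.map (𝟙 A) v' ≫ c := by
  have := hc.prod_map_id_eq (u := u') (v := v') (u' := u) (v' := v)
    (by rw [braid_natural_assoc, braid_natural_assoc, h])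
  simpa only [braid_natural_assoc, cancel_epi] using this

end KernelPairSndInvariant

lemma isCoeq_prod_map_id {T X X' Y : C} {u v : T ⟶ X} {q : X ⟶ X'} (hq : IsCoeq u v q)
    (hqY : IsRegEpi (prod.map q (𝟙 Y))) (hB : ∀ {Z : C} (c : X ⨯ Y ⟶ Z), KernelPairSndInvariant c) :
    IsCoeq (prod.map u (𝟙 Y)) (prod.map v (𝟙 Y)) (prod.map q (𝟙 Y)) := by
  obtain ⟨W, a, b, hab⟩ := hqY
  have := hab.epi
  refine isCoeq_of_epi (by rw [prod.map_map, prod.map_map, hq.1]) fun h hh =>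
    hab.exists_comp_eq h ?_
  have hinl (w : T ⟶ X) : w ≫ prod.lift (𝟙 X) 0 = prod.lift (𝟙 T) 0 ≫ prod.map w (𝟙 Y) := by
    rw [prod.comp_lift, prod.lift_map, Category.comp_id, Category.id_comp, comp_zero, zero_comp]
  obtain ⟨t, ht⟩ := hq.exists_comp_eq (prod.lift (𝟙 X) 0 ≫ h)
    (by rw [reassoc_of% hinl u, reassoc_of% hinl v, hh])
  have hfst (d : W ⟶ X ⨯ Y) : prod.lift (d ≫ prod.fst) 0 ≫ h = d ≫ prod.fst ≫ q ≫ t := by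
    simp only [ht, prod.comp_lift_assoc, Category.comp_id, comp_zero]
  refine KernelPairSndInvariant.comp_eq (hB h) ?_ ?_
  · simpa only [Category.assoc, prod.map_snd, Category.comp_id] using hab.1 =≫ prod.snd
  · rw [hfst, hfst]
    simpa only [Category.assoc, prod.map_fst] using (hab.1 =≫ prod.fst) =≫ t

lemma propertyP_of_kernelPairSndInvariant
    (hA : ∀ {X X' Y : C} (f : X ⟶ X'), IsRegEpi f → IsRegEpi (prod.map f (𝟙 Y)))
    (hB : ∀ {A B Q : C} (c : A ⨯ B ⟶ Q), KernelPairSndInvariant c) : PropertyP C := by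
  intro T₁ T₂ X X' Y Y' u v u' v' q₁ q₂ hq₁ hq₂
  have h₁ := isCoeq_prod_map_id hq₁ (hA (Y := Y) q₁ ⟨_, _, _, hq₁⟩) hB
  have h₂ := (isCoeq_prod_map_id hq₂ (hA (Y := X') q₂ ⟨_, _, _, hq₂⟩) hB).prod_map_swap
  have hq : prod.map q₁ (𝟙 Y) ≫ prod.map (𝟙 X') q₂ = prod.map q₁ q₂ := by
    rw [prod.map_map, Category.comp_id, Category.id_comp]
  have := h₁.epi
  have := h₂.epi
  have : Epi (prod.map q₁ q₂) := hq ▸ inferInstance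
  refine isCoeq_of_epi (by rw [prod.map_map, prod.map_map, hq₁.1, hq₂.1]) fun h hh => ?_
  obtain ⟨k₁, rfl⟩ :=
    h₁.exists_comp_eq h (KernelPairSndInvariant.prod_map_id_eq (hB h) hh)
  -- after `q₁ ⨯ 𝟙`, both sides of `hh` have first component `v ≫ q₁`
  obtain ⟨k₂, rfl⟩ := h₂.exists_comp_eq k₁
    (KernelPairSndInvariant.id_prod_map_eq (hB _) (u := v ≫ q₁) (v := v ≫ q₁)
      (by simpa only [prod.map_map_assoc, Category.comp_id, hq₁.1] using hh))
  exact ⟨k₂, by rw [← hq, Category.assoc]⟩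

end Products

theorem stmt4_general {C : Type*} [Category C] [HasFiniteLimits C] [HasCoequalizers C]
    [HasZeroMorphisms C] :
    PropertyP C ↔
      ((∀ {X X' Y Y' : C} (f : X ⟶ X') (g : Y ⟶ Y'), IsRegEpi f → IsIso g →
          IsRegEpi (prod.map f g)) ∧
       -- every effective equivalence relation `R` on a product `A ⨯ B` is the kernel
       -- pair of some morphism `c`; two generalized elements are `R`-related iff their
       -- composites with `c` agree
       (∀ {A B Q : C} (c : A ⨯ B ⟶ Q) {S : C} (x y : S ⟶ A) (z : S ⟶ B),
          prod.lift x 0 ≫ c = prod.lift y 0 ≫ c →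
            prod.lift x z ≫ c = prod.lift y z ≫ c)) := by
  constructor
  · intro hP
    exact ⟨fun f g hf _ => isRegEpi_prod_map_of_propertyP hP hf g,
      fun c => kernelPairSndInvariant_of_propertyP hP c⟩
  · rintro ⟨hA, hB⟩
    exact propertyP_of_kernelPairSndInvariant (fun f hf => hA f (𝟙 _) hf inferInstance) hB

theorem stmt4 {C : Type*} [Category C] [HasFiniteLimits C] [HasCoequalizers C]
    [HasZeroObject C] [HasZeroMorphisms C] :
    PropertyP C ↔
      ((∀ {X X' Y Y' : C} (f : X ⟶ X') (g : Y ⟶ Y'), IsRegEpi f → IsIso g →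
          IsRegEpi (prod.map f g)) ∧
       -- every effective equivalence relation `R` on a product `A ⨯ B` is the kernel
       -- pair of some morphism `c`; two generalized elements are `R`-related iff their
       -- composites with `c` agree
       (∀ {A B Q : C} (c : A ⨯ B ⟶ Q) {S : C} (x y : S ⟶ A) (z : S ⟶ B),
          prod.lift x 0 ≫ c = prod.lift y 0 ≫ c →
            prod.lift x z ≫ c = prod.lift y z ≫ c)) :=
  stmt4_general
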